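/- arXiv:1304.4913 — 2 statements merged into one kernel-verified Lean document; each statement's English description precedes it below -/
import Mathlib

section
/- Let F: ℝ_{>0} → ℂ be a bounded function, and suppose there exist constants c > 0 and C > 0 such that |F(y)| ≤ c·y^{−N}·(CN)^{CN} for every integer N ≥ 1 and every y > 0. Then there exist constants d > 0 and D > 0 such that |F(y)| ≤ D·exp(−y^d) for all y > 0. -/
/-!
Replace `C` by `A = max C 1`, so that `(C N)^{C N} ≤ (A N)^{A N}`. For large `y` take
`N = ⌈y^d⌉` with `d = 1/(4A)`, so that `N ≤ 2 y^d`. Then `log (A N) ≤ log (2A) + (log y)/(4A)`,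
hence `y^{-N} (A N)^{A N} ≤ exp (N (A log (2A) - ¾ log y)) ≤ exp (-N/2 · log y) ≤ exp (-y^d)` once
`log y` dominates both `2` and `4 A log (2A)`. Boundedness of `F` covers the remaining bounded
range of `y`.
-/

open Real

lemma rpow_self_le_rpow_self {x y : ℝ} (hx : 0 ≤ x) (hxy : x ≤ y) (hy : 1 ≤ y) :
    x ^ x ≤ y ^ y := by
  rcases le_or_gt x 1 with hx1 | hx1
  · exact (rpow_le_one hx hx1 hx).trans (one_le_rpow hy (by linarith))
  · calc x ^ x ≤ y ^ x := rpow_le_rpow hx hxy hx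
      _ ≤ y ^ y := rpow_le_rpow_of_exponent_le hy hxy

lemma exists_nat_le_two_mul {x : ℝ} (hx : 1 ≤ x) :
    ∃ N : ℕ, 1 ≤ N ∧ x ≤ N ∧ (N : ℝ) ≤ 2 * x := by
  refine ⟨⌈x⌉₊, Nat.one_le_ceil_iff.mpr (by linarith), Nat.le_ceil x, ?_⟩
  linarith [Nat.ceil_lt_add_one (by linarith : (0 : ℝ) ≤ x)]

lemma rpow_neg_mul_rpow_self_le_exp_neg {A y t : ℝ} (hA : 0 < A) (hy : 0 < y) (ht : 0 < t)
    (hlog_two : 2 ≤ log y) (hlog_A : 4 * A * log (2 * A) ≤ log y)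
    (ht_le : t ≤ 2 * y ^ (4 * A)⁻¹) :
    y ^ (-t) * (A * t) ^ (A * t) ≤ exp (-t) := by
  have hAt : 0 < A * t := by positivity
  have hlog_At : log (A * t) ≤ log (2 * A) + log y / (4 * A) :=
    calc log (A * t) ≤ log (2 * A * y ^ (4 * A)⁻¹) :=
          log_le_log hAt (by nlinarith)
      _ = log (2 * A) + log y / (4 * A) := by
          rw [log_mul (by positivity) (by positivity), log_rpow hy, inv_mul_eq_div]
  have hexponent : log y * -t + log (A * t) * (A * t) ≤ -t :=
    calc log y * -t + log (A * t) * (A * t)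
        ≤ log y * -t + (log (2 * A) + log y / (4 * A)) * (A * t) := by gcongr
      _ = t * (A * log (2 * A) - 3 / 4 * log y) := by field_simp; ring
      _ ≤ -t := by nlinarith
  rw [rpow_def_of_pos hy, rpow_def_of_pos hAt, ← exp_add]
  exact exp_le_exp.mpr hexponent

lemma exists_le_mul_exp_neg_rpow {f : ℝ → ℝ} {B K y₀ d : ℝ} (hy₀ : 0 ≤ y₀) (hd : 0 ≤ d)
    (hbdd : ∀ y, 0 < y → f y ≤ B) (hlarge : ∀ y, y₀ ≤ y → f y ≤ K * exp (-(y ^ d))) :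
    ∃ D > (0 : ℝ), ∀ y, 0 < y → f y ≤ D * exp (-(y ^ d)) := by
  set M := max (max B K) 1
  have hM : 0 < M := lt_of_lt_of_le one_pos (le_max_right _ _)
  refine ⟨M * exp (y₀ ^ d), by positivity, fun y hy => ?_⟩
  rcases lt_or_ge y y₀ with hyy₀ | hyy₀
  · have hexp : 1 ≤ exp (y₀ ^ d) * exp (-(y ^ d)) := by
      rw [← exp_add, one_le_exp_iff]
      linarith [rpow_le_rpow hy.le hyy₀.le hd]
    calc f y ≤ B := hbdd y hy
      _ ≤ M := le_trans (le_max_left _ _) (le_max_left _ _)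
      _ ≤ M * (exp (y₀ ^ d) * exp (-(y ^ d))) := le_mul_of_one_le_right hM.le hexp
      _ = M * exp (y₀ ^ d) * exp (-(y ^ d)) := by ring
  · calc f y ≤ K * exp (-(y ^ d)) := hlarge y hyy₀
      _ ≤ M * exp (-(y ^ d)) := by
          gcongr; exact le_trans (le_max_right _ _) (le_max_left _ _)
      _ ≤ M * exp (y₀ ^ d) * exp (-(y ^ d)) := by
          gcongr; exact le_mul_of_one_le_right hM.le (one_le_exp (by positivity))

/-- A bounded function on `ℝ_{>0}` satisfying the uniform rapid-decay bounds
`|F(y)| ≤ c·y^{−N}·(CN)^{CN}` for all `N ≥ 1` decays like a stretched exponential: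
`|F(y)| ≤ D·exp(−y^d)` for some `d, D > 0`. -/
theorem rapid_decay_implies_exponential_decay (F : ℝ → ℂ)
    (hbdd : ∃ B : ℝ, ∀ y : ℝ, 0 < y → ‖F y‖ ≤ B)
    (c C : ℝ) (hc : 0 < c) (hC : 0 < C)
    (hdecay : ∀ N : ℕ, 1 ≤ N → ∀ y : ℝ, 0 < y →
      ‖F y‖ ≤ c * y ^ (-(N : ℝ)) * (C * N) ^ (C * N)) :
    ∃ d > (0:ℝ), ∃ D > (0:ℝ), ∀ y : ℝ, 0 < y → ‖F y‖ ≤ D * Real.exp (-(y ^ d)) := by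
  obtain ⟨B, hB⟩ := hbdd
  set A := max C 1
  have hA : 1 ≤ A := le_max_right _ _
  set d := (4 * A)⁻¹
  set L₀ := max 2 (4 * A * log (2 * A))
  refine ⟨d, by positivity, exists_le_mul_exp_neg_rpow (K := c) (exp_pos L₀).le (by positivity) hB
    fun y hy => ?_⟩
  have hy_pos : 0 < y := (exp_pos L₀).trans_le hy
  have hlog : L₀ ≤ log y := (le_log_iff_exp_le hy_pos).mpr hy
  have hyd : 1 ≤ y ^ d := one_le_rpow ((one_le_exp (by positivity)).trans hy) (by positivity)
  obtain ⟨N, hN, hyN, hN2⟩ := exists_nat_le_two_mul hyd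
  have hN' : (1 : ℝ) ≤ N := by exact_mod_cast hN
  calc ‖F y‖ ≤ c * y ^ (-(N : ℝ)) * (C * N) ^ (C * N) := hdecay N hN y hy_pos
    _ ≤ c * (y ^ (-(N : ℝ)) * (A * N) ^ (A * N)) := by
        rw [mul_assoc]
        gcongr
        exact rpow_self_le_rpow_self (by positivity) (by gcongr; exact le_max_left _ _)
          (by nlinarith)
    _ ≤ c * exp (-(N : ℝ)) := by
        gcongr
        exact rpow_neg_mul_rpow_self_le_exp_neg (by positivity) hy_pos (by positivity)
          (le_of_max_le_left hlog) (le_of_max_le_right hlog) hN2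
    _ ≤ c * exp (-(y ^ d)) := by gcongr
end

section
/- Let Ŵ be the affine Weyl group of a finite crystallographic root system Δ, acting on the affine root system Δ̂_W = {α + nι : α ∈ Δ, n ∈ ℤ} with simple roots a₁,…,a_{ℓ+1} where a_i = α_i for i ≤ ℓ. Let W^θ = {w ∈ Ŵ : w^{-1}α_i > 0 for i = 1,…,ℓ} be the set of minimal-length coset representatives for W\Ŵ. If w ∈ W^θ and w^{-1}α_i = σ_i + κ_i(w^{-1})·ι with σ_i ∈ Δ and κ_i(w^{-1}) ∈ ℤ_{≥0}, then κ_i(w^{-1}) ≤ ℓ(w) + 1. -/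
open Finset

/-!
Since `w⁻¹` fixes `ι` and sends `α_i` to `σ_i + κ ι`, it sends `-α_i + n ι` to `-σ_i + (n - κ) ι`.
For `0 < n < κ` the root `-α_i + n ι` is therefore positive with negative image, i.e. an inversion.
These `κ - 1` distinct roots give `κ - 1 ≤ ℓ(w)`.
-/

theorem map_neg_add_smul_imaginary {V : Type*} [AddCommGroup V] [Module ℝ V]
    (u : (V × ℝ) →ₗ[ℝ] (V × ℝ)) (hι : u (0, 1) = (0, 1)) {α σ : V} {κ : ℝ}
    (hα : u (α, 0) = (σ, κ)) (n : ℝ) : u (-α, n) = (-σ, n - κ) := by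
  have hsplit : ((-α, n) : V × ℝ) = n • ((0 : V), (1 : ℝ)) - (α, 0) := by simp
  rw [hsplit, map_sub, map_smul, hι, hα]
  simp

theorem kostant_rep_kappa_le_length_add_one_general
    {V : Type*} [AddCommGroup V] [Module ℝ V] {l : ℕ}
    (Δplus : Set V) (αs : Fin l → V) (hαs : ∀ i, αs i ∈ Δplus)
    (Δ : Set V) (hΔ : Δ = Δplus ∪ (-Δplus))
    (Φ : Set (V × ℝ)) (hΦ : Φ = {p : V × ℝ | p.1 ∈ Δ ∧ ∃ m : ℤ, p.2 = (m : ℝ)})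
    (pos : V × ℝ → Prop) (hposdef : ∀ p, pos p ↔ (0 < p.2 ∨ (p.2 = 0 ∧ p.1 ∈ Δplus)))
    (u : (V × ℝ) ≃ₗ[ℝ] (V × ℝ))            -- the action of w⁻¹ on the affine roots
    (huι : u (0, 1) = (0, 1))               -- w⁻¹ fixes the imaginary root ι
    (Inv : Set (V × ℝ)) (hInv : Inv = {p ∈ Φ | pos p ∧ ¬ pos (u p)})
    (hfin : Inv.Finite)                     -- ℓ(w) = Inv.ncard, the inversion number of w
    (i : Fin l) (σ : V) (κ : ℤ)
    (hval : u (αs i, 0) = (σ, (κ : ℝ))) :   -- w⁻¹α_i = σ_i + κ_i(w⁻¹)·ι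
    κ ≤ (Inv.ncard : ℤ) + 1 := by
  subst hΔ hΦ
  have hstring : ∀ n ∈ (Icc 1 (κ - 1) : Set ℤ), ((-αs i, (n : ℝ)) : V × ℝ) ∈ Inv := by
    intro n hn
    rw [coe_Icc, Set.mem_Icc] at hn
    have hn0 : (0 : ℝ) < n := by exact_mod_cast hn.1
    have hnκ : (n : ℝ) - κ < 0 := by
      rw [sub_neg]
      exact_mod_cast hn.2.trans_lt (sub_one_lt κ)
    have himage : u (-αs i, (n : ℝ)) = (-σ, (n : ℝ) - κ) :=
      map_neg_add_smul_imaginary u.toLinearMap huι hval n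
    rw [hInv]
    refine ⟨⟨Or.inr (by simpa using hαs i), ⟨n, rfl⟩⟩, (hposdef _).2 (Or.inl hn0), ?_⟩
    rw [himage, hposdef]
    rintro (h | ⟨h, -⟩) <;> dsimp only at h <;> linarith
  have hcard := Set.ncard_le_ncard_of_injOn (fun n : ℤ => ((-αs i, (n : ℝ)) : V × ℝ)) hstring
    (fun a _ b _ hab => by simpa using congrArg Prod.snd hab) hfin
  rw [Set.ncard_coe_finset, Int.card_Icc] at hcard
  omega

/-- For a Kostant coset representative `w ∈ W^θ` in the affine Weyl group, writing
`w⁻¹α_i = σ_i + κ_i(w⁻¹)·ι`, one has `κ_i(w⁻¹) ≤ ℓ(w) + 1`, where `ℓ(w)` is realized as the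
cardinality of the inversion set of `w`.  The affine real roots are modeled as pairs
`(α, n) ∈ V × ℝ` with `α` a classical root and `n ∈ ℤ` the coefficient of the minimal
imaginary root `ι = (0,1)`, and `u` models the (linear) action of `w⁻¹`. -/
theorem kostant_rep_kappa_le_length_add_one
    {V : Type*} [AddCommGroup V] [Module ℝ V] {l : ℕ}
    (Δplus : Set V) (αs : Fin l → V) (hαs : ∀ i, αs i ∈ Δplus)
    (Δ : Set V) (hΔ : Δ = Δplus ∪ (-Δplus))
    (Φ : Set (V × ℝ)) (hΦ : Φ = {p : V × ℝ | p.1 ∈ Δ ∧ ∃ m : ℤ, p.2 = (m : ℝ)})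
    (pos : V × ℝ → Prop) (hposdef : ∀ p, pos p ↔ (0 < p.2 ∨ (p.2 = 0 ∧ p.1 ∈ Δplus)))
    (u : (V × ℝ) ≃ₗ[ℝ] (V × ℝ))            -- the action of w⁻¹ on the affine roots
    (hu : ∀ p ∈ Φ, u p ∈ Φ)
    (huι : u (0, 1) = (0, 1))               -- w⁻¹ fixes the imaginary root ι
    (hW : ∀ i, pos (u (αs i, 0)))           -- w ∈ W^θ
    (Inv : Set (V × ℝ)) (hInv : Inv = {p ∈ Φ | pos p ∧ ¬ pos (u p)})
    (hfin : Inv.Finite)                     -- ℓ(w) = Inv.ncard, the inversion number of w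
    (i : Fin l) (σ : V) (hσ : σ ∈ Δ) (κ : ℤ) (hκ : 0 ≤ κ)
    (hval : u (αs i, 0) = (σ, (κ : ℝ))) :   -- w⁻¹α_i = σ_i + κ_i(w⁻¹)·ι
    κ ≤ (Inv.ncard : ℤ) + 1 :=
  kostant_rep_kappa_le_length_add_one_general Δplus αs hαs Δ hΔ Φ hΦ pos hposdef u huι Inv hInv hfin
    i σ κ hval
end
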